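/- arXiv:2102.13105 — 4 statements merged into one kernel-verified Lean document; each statement's English description precedes it below -/
import Mathlib

section
/- Let f : ℝ → ℂ be differentiable, and suppose there exist constants C ≥ 0 and a natural number N with ‖f(x)‖ ≤ C·(1+|x|)^N and ‖f′(x)‖ ≤ C·(1+|x|)^N for all x ∈ ℝ. Then for every Schwartz function φ : ℝ → ℂ, ∫_ℝ f′(x)·φ(x) dx = −∫_ℝ f(x)·φ′(x) dx. -/
/-!
Polynomial growth of `f` and `f′` is absorbed by the rapid decay of `φ` and `φ′`, so `f φ`,
`f′ φ` and `f φ′` are all integrable; integration by parts on `ℝ` then holds with no boundary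
terms.
-/

open MeasureTheory Filter

namespace SchwartzMap

variable {D V : Type*} [NormedAddCommGroup D] [NormedSpace ℝ D] [MeasurableSpace D]
  [BorelSpace D] [SecondCountableTopology D] {μ : Measure D} [μ.HasTemperateGrowth]

theorem integrable_one_add_norm_pow_mul [NormedAddCommGroup V] [NormedSpace ℝ V]
    (ψ : 𝓢(D, V)) (N : ℕ) : Integrable (fun x ↦ (1 + ‖x‖) ^ N * ‖ψ x‖) μ := by
  have hexpand : (fun x ↦ (1 + ‖x‖) ^ N * ‖ψ x‖) =
      fun x ↦ ∑ k ∈ Finset.range (N + 1), (N.choose k : ℝ) * (‖x‖ ^ k * ‖ψ x‖) := by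
    ext x
    rw [add_comm, add_pow, Finset.sum_mul]
    refine Finset.sum_congr rfl fun k _ ↦ ?_
    rw [one_pow, mul_one]
    ring
  rw [hexpand]
  exact integrable_finsetSum _ fun k _ ↦ (ψ.integrable_pow_mul μ k).const_mul _

theorem integrable_mul_of_norm_le_one_add_norm_pow [NormedRing V] [NormedSpace ℝ V]
    {g : D → V} (hg : AEStronglyMeasurable g μ) {C : ℝ} {N : ℕ}
    (hb : ∀ x, ‖g x‖ ≤ C * (1 + ‖x‖) ^ N) (ψ : 𝓢(D, V)) :
    Integrable (fun x ↦ g x * ψ x) μ := by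
  refine ((ψ.integrable_one_add_norm_pow_mul N).const_mul C).mono'
    (hg.mul ψ.continuous.aestronglyMeasurable) (Eventually.of_forall fun x ↦ ?_)
  calc ‖g x * ψ x‖ ≤ ‖g x‖ * ‖ψ x‖ := norm_mul_le _ _
    _ ≤ C * (1 + ‖x‖) ^ N * ‖ψ x‖ := by gcongr; exact hb x
    _ = C * ((1 + ‖x‖) ^ N * ‖ψ x‖) := mul_assoc _ _ _

end SchwartzMap

theorem integral_deriv_mul_schwartz_general
    (f : ℝ → ℂ) (hf : Differentiable ℝ f)
    (C : ℝ) (N : ℕ)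
    (hfb : ∀ x : ℝ, ‖f x‖ ≤ C * (1 + |x|) ^ N)
    (hf'b : ∀ x : ℝ, ‖deriv f x‖ ≤ C * (1 + |x|) ^ N)
    (φ : SchwartzMap ℝ ℂ) :
    ∫ x : ℝ, deriv f x * φ x = -∫ x : ℝ, f x * deriv (⇑φ) x := by
  have hfm : AEStronglyMeasurable f volume := hf.continuous.aestronglyMeasurable
  have hfb' : ∀ x : ℝ, ‖f x‖ ≤ C * (1 + ‖x‖) ^ N := by simpa only [Real.norm_eq_abs] using hfb
  have hf'b' : ∀ x : ℝ, ‖deriv f x‖ ≤ C * (1 + ‖x‖) ^ N := by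
    simpa only [Real.norm_eq_abs] using hf'b
  have hfφ' : Integrable fun x ↦ f x * deriv φ x := by
    simpa only [SchwartzMap.derivCLM_apply] using
      SchwartzMap.integrable_mul_of_norm_le_one_add_norm_pow hfm hfb' (SchwartzMap.derivCLM ℝ ℂ φ)
  have hf'φ : Integrable fun x ↦ deriv f x * φ x :=
    SchwartzMap.integrable_mul_of_norm_le_one_add_norm_pow
      (stronglyMeasurable_deriv f).aestronglyMeasurable hf'b' φ
  have hfφ : Integrable fun x ↦ f x * φ x :=
    SchwartzMap.integrable_mul_of_norm_le_one_add_norm_pow hfm hfb' φ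
  rw [integral_mul_deriv_eq_deriv_mul_of_integrable (fun x _ ↦ (hf x).hasDerivAt)
    (fun x _ ↦ φ.differentiableAt.hasDerivAt) hfφ' hf'φ hfφ, neg_neg]

/-- Integration by parts against a Schwartz function, for a differentiable function of
polynomial growth: `⟨f′, φ⟩ = −⟨f, φ′⟩`. -/
theorem integral_deriv_mul_schwartz
    (f : ℝ → ℂ) (hf : Differentiable ℝ f)
    (C : ℝ) (hC : 0 ≤ C) (N : ℕ)
    (hfb : ∀ x : ℝ, ‖f x‖ ≤ C * (1 + |x|) ^ N)
    (hf'b : ∀ x : ℝ, ‖deriv f x‖ ≤ C * (1 + |x|) ^ N)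
    (φ : SchwartzMap ℝ ℂ) :
    ∫ x : ℝ, deriv f x * φ x = -∫ x : ℝ, f x * deriv (⇑φ) x :=
  integral_deriv_mul_schwartz_general f hf C N hfb hf'b φ
end

section
/- For every real λ > 0 and every q ∈ ℝ³, the function x ↦ (exp(−λ‖x‖)/‖x‖) · exp(−i⟪q,x⟫) is integrable on ℝ³ and ∫_{ℝ³} (exp(−λ‖x‖)/‖x‖) · exp(−i⟪q,x⟫) dx = 4π/(λ² + ‖q‖²). (The three-dimensional Fourier transform of the screened Coulomb/Yukawa potential.) -/
open MeasureTheory Filter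
open scoped RealInnerProductSpace

/-!
Rotating `q` onto the first coordinate axis (a reflection suffices), the integral becomes
`∫ e^{-λ‖x‖}/‖x‖ · e^{-i m x₀} dx` with `m = ‖q‖`. Integrating first over the plane orthogonal
to the axis, in polar coordinates, the slice at height `z` contributes `(2π/λ) e^{-λ|z|}`,
because `-e^{-λ√(z² + r²)}/λ` is an antiderivative of `r e^{-λ√(z² + r²)}/√(z² + r²)`.
What remains is the one-dimensional Fourier transform of `e^{-λ|z|}`, namely `2λ/(λ² + m²)`.
-/

open Set Real Module
open scoped Topology Complex

theorem integral_fun_norm_inner_of_norm_eq {E F : Type*} [NormedAddCommGroup E]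
    [InnerProductSpace ℝ E] [FiniteDimensional ℝ E] [MeasurableSpace E] [BorelSpace E]
    [NormedAddCommGroup F] [NormedSpace ℝ F] (f : ℝ → ℝ → F) {q w : E} (h : ‖q‖ = ‖w‖) :
    ∫ x, f ‖x‖ ⟪q, x⟫ = ∫ x, f ‖x‖ ⟪w, x⟫ := by
  set R := (ℝ ∙ (q - w))ᗮ.reflection
  rw [← R.measurePreserving.integral_comp R.toHomeomorph.measurableEmbedding]
  congr! 2 with x
  rw [R.norm_map, ← Submodule.reflection_sub h, ← R.inner_map_map,
    Submodule.reflection_reflection]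

namespace EuclideanSpace

variable {n : ℕ}

noncomputable def insertNth (i : Fin (n + 1)) (z : ℝ) (v : EuclideanSpace ℝ (Fin n)) :
    EuclideanSpace ℝ (Fin (n + 1)) :=
  WithLp.toLp 2 (Fin.insertNth (α := fun _ => ℝ) i z v.ofLp)

@[simp]
theorem insertNth_apply_same (i : Fin (n + 1)) (z : ℝ) (v : EuclideanSpace ℝ (Fin n)) :
    insertNth i z v i = z := by
  simp [insertNth]

theorem norm_insertNth (i : Fin (n + 1)) (z : ℝ) (v : EuclideanSpace ℝ (Fin n)) :
    ‖insertNth i z v‖ = √(z ^ 2 + ‖v‖ ^ 2) := by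
  rw [EuclideanSpace.norm_eq, EuclideanSpace.norm_eq, Real.sq_sqrt (by positivity),
    Fin.sum_univ_succAbove _ i]
  simp [insertNth]

theorem integral_eq_integral_insertNth (i : Fin (n + 1)) {F : Type*}
    [NormedAddCommGroup F] [NormedSpace ℝ F] {f : EuclideanSpace ℝ (Fin (n + 1)) → F}
    (hf : Integrable f) :
    ∫ x, f x = ∫ z : ℝ, ∫ v : EuclideanSpace ℝ (Fin n), f (insertNth i z v) := by
  let e : ℝ × EuclideanSpace ℝ (Fin n) ≃ᵐ EuclideanSpace ℝ (Fin (n + 1)) :=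
    ((MeasurableEquiv.refl ℝ).prodCongr (MeasurableEquiv.toLp 2 _).symm).trans
      ((MeasurableEquiv.piFinSuccAbove (fun _ => ℝ) i).symm.trans (MeasurableEquiv.toLp 2 _))
  have he : MeasurePreserving e :=
    ((MeasurePreserving.id volume).prod (PiLp.volume_preserving_ofLp _)).trans
      ((volume_preserving_piFinSuccAbove (fun _ => ℝ) i).symm.trans
        (PiLp.volume_preserving_toLp _))
  rw [← he.integral_comp' f, Measure.volume_eq_prod, integral_prod]
  · rfl
  · rw [← Measure.volume_eq_prod]
    exact he.integrable_comp_emb e.measurableEmbedding |>.mpr hf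

end EuclideanSpace

theorem MeasureTheory.Integrable.ofReal_mul_exp_neg_I_mul {α : Type*} [MeasurableSpace α]
    {μ : Measure α} {u φ : α → ℝ} (hu : Integrable u μ) (hφ : Measurable φ) :
    Integrable (fun x => (u x : ℂ) * cexp (-(Complex.I * φ x))) μ :=
  hu.ofReal.mul_bdd (c := 1) (by fun_prop) (ae_of_all _ fun x => by simp [Complex.norm_exp])

theorem integrable_exp_neg_mul_norm_div_norm {E : Type*} [NormedAddCommGroup E]
    [NormedSpace ℝ E] [FiniteDimensional ℝ E] [MeasurableSpace E] [BorelSpace E]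
    (μ : Measure E) [μ.IsAddHaarMeasure] (hE : 2 ≤ finrank ℝ E) {l : ℝ} (hl : 0 < l) :
    Integrable (fun x : E => rexp (-(l * ‖x‖)) / ‖x‖) μ := by
  obtain ⟨k, hk⟩ : ∃ k, finrank ℝ E = k + 2 := ⟨_, (Nat.sub_add_cancel hE).symm⟩
  have : Nontrivial E := Module.nontrivial_of_finrank_eq_succ hk
  rw [integrable_fun_norm_addHaar μ (f := fun r => rexp (-(l * r)) / r), hk]
  refine (integrableOn_rpow_mul_exp_neg_mul_rpow (s := k) (p := 1)
    (neg_one_lt_zero.trans_le k.cast_nonneg) one_pos hl).congr_fun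
    (fun r (hr : 0 < r) => ?_) measurableSet_Ioi
  simp only [show k + 2 - 1 = k + 1 by omega, smul_eq_mul, Real.rpow_natCast, Real.rpow_one,
    neg_mul]
  field_simp
  ring

theorem integral_Ioi_mul_exp_neg_mul_sqrt_div_sqrt {l : ℝ} (hl : 0 < l) (z : ℝ) :
    ∫ r in Ioi 0, r * (rexp (-(l * √(z ^ 2 + r ^ 2))) / √(z ^ 2 + r ^ 2)) =
      rexp (-(l * |z|)) / l := by
  set g : ℝ → ℝ := fun r => -(rexp (-(l * √(z ^ 2 + r ^ 2))) / l)
  have hderiv : ∀ r ∈ Ioi (0 : ℝ),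
      HasDerivAt g (r * (rexp (-(l * √(z ^ 2 + r ^ 2))) / √(z ^ 2 + r ^ 2))) r := by
    intro r (hr : 0 < r)
    have hpos : 0 < z ^ 2 + r ^ 2 := by positivity
    have := ((((hasDerivAt_pow 2 r).const_add (z ^ 2)).sqrt hpos.ne').const_mul l).neg.exp
      |>.div_const l |>.neg
    refine HasDerivAt.congr_deriv (f := g) this ?_
    simp only [Pi.neg_apply]
    field_simp
    ring
  have hsqrt : Tendsto (fun r : ℝ => √(z ^ 2 + r ^ 2)) atTop atTop := by
    refine tendsto_atTop_mono (fun r => ?_) tendsto_id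
    calc r ≤ √(r ^ 2) := Real.le_sqrt_of_sq_le le_rfl
      _ ≤ √(z ^ 2 + r ^ 2) := Real.sqrt_le_sqrt (le_add_of_nonneg_left (sq_nonneg z))
  have hlim : Tendsto g atTop (𝓝 0) := by
    simpa [g] using ((Real.tendsto_exp_atBot.comp
      (tendsto_neg_atTop_atBot.comp (hsqrt.const_mul_atTop hl))).div_const l).neg
  rw [integral_Ioi_of_hasDerivAt_of_nonneg (by fun_prop) hderiv
    (fun r (hr : 0 < r) => by positivity) hlim]
  simp [g, Real.sqrt_sq_eq_abs]

theorem integral_exp_neg_mul_sqrt_div_sqrt_euclideanSpace_fin_two {l : ℝ} (hl : 0 < l)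
    (z : ℝ) :
    ∫ v : EuclideanSpace ℝ (Fin 2), rexp (-(l * √(z ^ 2 + ‖v‖ ^ 2))) / √(z ^ 2 + ‖v‖ ^ 2) =
      2 * π * (rexp (-(l * |z|)) / l) := by
  rw [integral_fun_norm_addHaar volume
    (fun r => rexp (-(l * √(z ^ 2 + r ^ 2))) / √(z ^ 2 + r ^ 2))]
  simp [integral_Ioi_mul_exp_neg_mul_sqrt_div_sqrt hl, Measure.real, pi_nonneg, mul_assoc]

theorem integral_exp_neg_mul_abs_mul_cexp {l : ℝ} (hl : 0 < l) (m : ℝ) :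
    ∫ z : ℝ, (rexp (-(l * |z|)) : ℂ) * cexp (-(Complex.I * (m * z : ℝ))) =
      ((2 * l / (l ^ 2 + m ^ 2) : ℝ) : ℂ) := by
  set f : ℝ → ℂ := fun z => (rexp (-(l * |z|)) : ℂ) * cexp (-(Complex.I * (m * z : ℝ)))
  have hIic : EqOn f (fun z : ℝ => cexp ((l - m * Complex.I) * z)) (Iic 0) := by
    intro z (hz : z ≤ 0)
    simp only [f, abs_of_nonpos hz, Complex.ofReal_exp, ← Complex.exp_add]
    push_cast
    ring_nf
  have hIoi : EqOn f (fun z : ℝ => cexp (-(l + m * Complex.I) * z)) (Ioi 0) := by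
    intro z (hz : 0 < z)
    simp only [f, abs_of_pos hz, Complex.ofReal_exp, ← Complex.exp_add]
    push_cast
    ring_nf
  have hre₁ : 0 < ((l : ℂ) - m * Complex.I).re := by simpa using hl
  have hre₂ : (-((l : ℂ) + m * Complex.I)).re < 0 := by simpa using hl
  rw [← intervalIntegral.integral_Iic_add_Ioi
      ((integrableOn_exp_mul_complex_Iic hre₁ 0).congr_fun hIic.symm measurableSet_Iic)
      ((integrableOn_exp_mul_complex_Ioi hre₂ 0).congr_fun hIoi.symm measurableSet_Ioi),
    setIntegral_congr_fun measurableSet_Iic hIic, setIntegral_congr_fun measurableSet_Ioi hIoi,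
    integral_exp_mul_complex_Iic hre₁, integral_exp_mul_complex_Ioi hre₂]
  have h₁ : (l : ℂ) - m * Complex.I ≠ 0 := fun h => by simp [h] at hre₁
  have h₂ : (l : ℂ) + m * Complex.I ≠ 0 := fun h => by simp [h] at hre₂
  have h₃ : (l : ℂ) ^ 2 + m ^ 2 ≠ 0 := by exact_mod_cast (by positivity : l ^ 2 + m ^ 2 ≠ 0)
  push_cast
  simp only [mul_zero, Complex.exp_zero]
  field_simp
  linear_combination (2 * l * m ^ 2 : ℂ) * Complex.I_sq

theorem integral_exp_neg_mul_norm_div_norm_mul_cexp_apply_zero {l : ℝ} (hl : 0 < l) (m : ℝ) :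
    ∫ x : EuclideanSpace ℝ (Fin 3),
        ((rexp (-(l * ‖x‖)) / ‖x‖ : ℝ) : ℂ) * cexp (-(Complex.I * (m * x 0 : ℝ))) =
      ((4 * π / (l ^ 2 + m ^ 2) : ℝ) : ℂ) := by
  have hint := (integrable_exp_neg_mul_norm_div_norm volume (E := EuclideanSpace ℝ (Fin 3))
    (by simp) hl).ofReal_mul_exp_neg_I_mul (φ := fun x => m * x 0) (by fun_prop)
  rw [EuclideanSpace.integral_eq_integral_insertNth 0 hint]
  simp only [EuclideanSpace.norm_insertNth, EuclideanSpace.insertNth_apply_same,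
    integral_mul_const, integral_complex_ofReal,
    integral_exp_neg_mul_sqrt_div_sqrt_euclideanSpace_fin_two hl]
  have hfactor : ∀ z : ℝ,
      ((2 * π * (rexp (-(l * |z|)) / l) : ℝ) : ℂ) * cexp (-(Complex.I * (m * z : ℝ))) =
        ((2 * π / l : ℝ) : ℂ) * ((rexp (-(l * |z|)) : ℂ) * cexp (-(Complex.I * (m * z : ℝ)))) := by
    intro z
    push_cast
    ring
  simp_rw [hfactor, integral_const_mul, integral_exp_neg_mul_abs_mul_cexp hl,
    ← Complex.ofReal_mul]
  congr 1
  field_simp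
  ring

/-- The three-dimensional Fourier transform of the screened Coulomb (Yukawa) potential:
`∫ (e^{−λr}/r) e^{−i⟪q,x⟫} dx = 4π/(λ² + q²)`. -/
theorem yukawa_fourier (l : ℝ) (hl : 0 < l) (q : EuclideanSpace ℝ (Fin 3)) :
    Integrable (fun x : EuclideanSpace ℝ (Fin 3) =>
      ((Real.exp (-(l * ‖x‖)) / ‖x‖ : ℝ) : ℂ) *
        Complex.exp (-(Complex.I * (⟪q, x⟫ : ℝ)))) ∧
    ∫ x : EuclideanSpace ℝ (Fin 3),
        ((Real.exp (-(l * ‖x‖)) / ‖x‖ : ℝ) : ℂ) *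
          Complex.exp (-(Complex.I * (⟪q, x⟫ : ℝ)))
      = ((4 * Real.pi / (l ^ 2 + ‖q‖ ^ 2) : ℝ) : ℂ) := by
  refine ⟨(integrable_exp_neg_mul_norm_div_norm volume (by simp) hl).ofReal_mul_exp_neg_I_mul
    (by fun_prop), ?_⟩
  have hw : ‖q‖ = ‖‖q‖ • EuclideanSpace.single (0 : Fin 3) (1 : ℝ)‖ := by
    rw [norm_smul, PiLp.norm_single, norm_one, mul_one, norm_norm]
  rw [integral_fun_norm_inner_of_norm_eq
    (fun r t => ((rexp (-(l * r)) / r : ℝ) : ℂ) * cexp (-(Complex.I * t))) hw]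
  simpa [real_inner_smul_left, EuclideanSpace.inner_single_left] using
    integral_exp_neg_mul_norm_div_norm_mul_cexp_apply_zero hl ‖q‖
end

section
/- Let V : ℝ → ℂ be measurable with ∫₀^∞ r² ‖V(r)‖ dr < ∞. Then for every q ∈ ℝ³ with q ≠ 0, the function x ↦ V(‖x‖)·exp(−i⟪q,x⟫) is integrable on ℝ³ and ∫_{ℝ³} V(‖x‖) · exp(−i⟪q,x⟫) dx = (4π/‖q‖) · ∫₀^∞ V(r) · r · sin(‖q‖·r) dr. (Reduction of the three-dimensional Fourier transform of a spherically symmetric potential to a one-dimensional integral.) -/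
/-!
Choose cylindrical coordinates `x = (z, w) ∈ ℝ × ℝ²` with the `z`-axis along `q`, so that
`⟪q, x⟫ = ‖q‖ z` and `‖x‖ = √(z² + ‖w‖²)`. Polar coordinates in `w` followed by the substitution
`r = √(z² + s²)` give `∫_{ℝ²} V(√(z² + ‖w‖²)) dw = 2π ∫_{|z|}^∞ r V(r) dr`. Exchanging the
`z`- and `r`-integrations over the region `|z| < r` leaves the elementary integral
`∫_{-r}^{r} e^{-i‖q‖z} dz = 2 sin(‖q‖r) / ‖q‖`.
-/

open MeasureTheory Set
open Module (finrank)
open scoped RealInnerProductSpace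

section

variable {E F : Type*} [NormedAddCommGroup E] [InnerProductSpace ℝ E] [FiniteDimensional ℝ E]
  [NormedAddCommGroup F] [InnerProductSpace ℝ F] [FiniteDimensional ℝ F]

theorem exists_linearIsometryEquiv_inner_eq_mul_fst (hEF : finrank ℝ E = finrank ℝ F + 1)
    (q : E) : ∃ L : WithLp 2 (ℝ × F) ≃ₗᵢ[ℝ] E, ∀ p, ⟪q, L p⟫ = ‖q‖ * (WithLp.ofLp p).1 := by
  have hrank : finrank ℝ (WithLp 2 (ℝ × F)) = finrank ℝ E := by
    rw [(WithLp.linearEquiv 2 ℝ (ℝ × F)).finrank_eq, Module.finrank_prod, hEF,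
      Module.finrank_self, add_comm]
  let L₀ : WithLp 2 (ℝ × F) ≃ₗᵢ[ℝ] E :=
    ((stdOrthonormalBasis ℝ _).reindex (finCongr hrank)).repr.trans
      (stdOrthonormalBasis ℝ E).repr.symm
  rcases eq_or_ne q 0 with rfl | hq
  · exact ⟨L₀, by simp⟩
  set v := L₀ (WithLp.toLp 2 (1, 0))
  set u := ‖q‖⁻¹ • q
  have hvu : ‖v‖ = ‖u‖ := by simp [v, u, L₀.norm_map, norm_smul, hq]
  set R := Submodule.reflection (ℝ ∙ (v - u))ᗮ
  have hq_eq : q = ‖q‖ • R v := by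
    rw [Submodule.reflection_sub hvu, smul_inv_smul₀ (norm_ne_zero_iff.2 hq)]
  refine ⟨L₀.trans R, fun p => ?_⟩
  calc ⟪q, L₀.trans R p⟫ = ‖q‖ * ⟪v, L₀ p⟫ := by
        conv_lhs => rw [hq_eq]
        rw [real_inner_smul_left, LinearIsometryEquiv.trans_apply,
          LinearIsometryEquiv.inner_map_map]
    _ = ‖q‖ * (WithLp.ofLp p).1 := by simp [v, L₀.inner_map_map]

variable [MeasurableSpace E] [BorelSpace E] [MeasurableSpace F] [BorelSpace F]

theorem exists_measurePreserving_inner_eq_mul_fst (hEF : finrank ℝ E = finrank ℝ F + 1)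
    (q : E) : ∃ e : ℝ × F ≃ᵐ E, MeasurePreserving e ∧
      (∀ z w, ‖e (z, w)‖ = √(z ^ 2 + ‖w‖ ^ 2)) ∧ ∀ z w, ⟪q, e (z, w)⟫ = ‖q‖ * z := by
  obtain ⟨L, hL⟩ := exists_linearIsometryEquiv_inner_eq_mul_fst hEF q
  refine ⟨(MeasurableEquiv.toLp 2 (ℝ × F)).trans L.toHomeomorph.toMeasurableEquiv,
    L.measurePreserving.comp (WithLp.volume_preserving_toLp ℝ F), fun z w => ?_, fun z w => hL _⟩
  simp [WithLp.prod_norm_eq_of_L2]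

variable {G : Type*} [NormedAddCommGroup G] [NormedSpace ℝ G]

theorem image_sqrt_sq_add_sq_Ioi (z : ℝ) : (fun s => √(z ^ 2 + s ^ 2)) '' Ioi 0 = Ioi |z| := by
  ext r
  constructor
  · rintro ⟨s, hs, rfl⟩
    rw [mem_Ioi, ← Real.sqrt_sq_eq_abs]
    exact Real.sqrt_lt_sqrt (sq_nonneg z) (lt_add_of_pos_right _ (pow_pos hs 2))
  · intro (hr : |z| < r)
    have hzr : z ^ 2 < r ^ 2 := sq_lt_sq' (abs_lt.1 hr).1 (abs_lt.1 hr).2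
    refine ⟨√(r ^ 2 - z ^ 2), Real.sqrt_pos.2 (by linarith), ?_⟩
    show √(z ^ 2 + √(r ^ 2 - z ^ 2) ^ 2) = r
    rw [Real.sq_sqrt (by linarith), add_sub_cancel, Real.sqrt_sq ((abs_nonneg z).trans hr.le)]

theorem integral_Ioi_smul_comp_sqrt_sq_add_sq (z : ℝ) (h : ℝ → G) :
    ∫ s in Ioi (0 : ℝ), s • h √(z ^ 2 + s ^ 2) = ∫ r in Ioi |z|, r • h r := by
  have hpos : ∀ s ∈ Ioi (0 : ℝ), 0 < z ^ 2 + s ^ 2 := fun s (hs : 0 < s) => by positivity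
  have hderiv : ∀ s ∈ Ioi (0 : ℝ), HasDerivWithinAt (fun s => √(z ^ 2 + s ^ 2))
      (s / √(z ^ 2 + s ^ 2)) (Ioi 0) s := fun s hs => by
    refine (((hasDerivAt_pow 2 s).const_add (z ^ 2)).sqrt (hpos s hs).ne').hasDerivWithinAt
      |>.congr_deriv ?_
    field_simp
    norm_num
  have hmono : StrictMonoOn (fun s => √(z ^ 2 + s ^ 2)) (Ioi 0) := fun a ha b hb hab =>
    Real.sqrt_lt_sqrt (hpos a ha).le (by gcongr; exact le_of_lt ha)
  rw [← image_sqrt_sq_add_sq_Ioi, integral_image_eq_integral_abs_deriv_smul measurableSet_Ioi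
    hderiv hmono.injOn]
  refine setIntegral_congr_fun measurableSet_Ioi fun s hs => ?_
  have hsqrt : 0 < √(z ^ 2 + s ^ 2) := Real.sqrt_pos.2 (hpos s hs)
  rw [abs_of_pos (div_pos hs hsqrt), smul_smul, div_mul_cancel₀ _ hsqrt.ne']

theorem integral_comp_sqrt_sq_add_norm_sq (hF : finrank ℝ F = 2) (z : ℝ) (h : ℝ → G) :
    ∫ w : F, h √(z ^ 2 + ‖w‖ ^ 2) = (2 * Real.pi) • ∫ r in Ioi |z|, r • h r := by
  have : Nontrivial F := Module.nontrivial_of_finrank_eq_succ hF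
  have hball : volume.real (Metric.ball (0 : F) 1) = Real.pi := by
    simp [Measure.real, InnerProductSpace.volume_ball, hF, Real.sq_sqrt Real.pi_nonneg,
      one_add_one_eq_two, Real.pi_nonneg]
  rw [integral_fun_norm_addHaar volume (fun t => h √(z ^ 2 + t ^ 2)), hF, hball,
    ← integral_Ioi_smul_comp_sqrt_sq_add_sq]
  rw [← Nat.cast_smul_eq_nsmul ℝ, smul_smul]
  norm_num

end

theorem integrable_indicator_abs_lt {g : ℝ → ℂ} (hg : Measurable g)
    (hgi : IntegrableOn (fun r => r • g r) (Ioi 0)) :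
    Integrable ({p : ℝ × ℝ | |p.1| < p.2}.indicator fun p => g p.2) (volume.prod volume) := by
  have hslice : ∀ z r, {p : ℝ × ℝ | |p.1| < p.2}.indicator (fun p => g p.2) (z, r) =
      (Ioo (-r) r).indicator (fun _ => g r) z := fun z r => by
    simp [indicator_apply, abs_lt]
  have hmeas : Measurable ({p : ℝ × ℝ | |p.1| < p.2}.indicator fun p => g p.2) :=
    (hg.comp measurable_snd).indicator (measurableSet_lt measurable_fst.abs measurable_snd)
  refine (integrable_prod_iff' hmeas.aestronglyMeasurable).2 ⟨.of_forall fun r => ?_, ?_⟩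
  · simp only [hslice]
    exact (integrable_indicator_iff measurableSet_Ioo).2 (integrableOn_const (by simp))
  · have hnorm : (fun r => ∫ z, ‖{p : ℝ × ℝ | |p.1| < p.2}.indicator (fun p => g p.2) (z, r)‖) =
        (Ioi 0).indicator fun r => 2 * ‖r • g r‖ := funext fun r => by
      simp only [hslice, norm_indicator_eq_indicator_norm]
      rw [integral_indicator_const _ measurableSet_Ioo, Real.volume_real_Ioo, smul_eq_mul]
      rcases le_or_gt r 0 with hr | hr
      · simp [hr]
      · simp [hr, abs_of_pos hr, hr.le]
        ring
    rw [hnorm]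
    exact IntegrableOn.integrable_indicator (hgi.norm.const_mul 2) measurableSet_Ioi

theorem integral_mul_integral_Ioi_abs {g φ : ℝ → ℂ} (hg : Measurable g)
    (hgi : IntegrableOn (fun r => r • g r) (Ioi 0)) (hφ : Measurable φ) {C : ℝ}
    (hC : ∀ z, ‖φ z‖ ≤ C) :
    ∫ z, φ z * ∫ r in Ioi |z|, g r = ∫ r in Ioi 0, g r * ∫ z in Ioo (-r) r, φ z := by
  set H := {p : ℝ × ℝ | |p.1| < p.2}.indicator fun p => g p.2
  have hslice_fst : ∀ z r, H (z, r) = (Ioi |z|).indicator g r := fun z r => rfl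
  have hslice_snd : ∀ z r, φ z * H (z, r) = (Ioo (-r) r).indicator (fun z => g r * φ z) z :=
    fun z r => by simp [H, indicator_apply, abs_lt, mul_comm]
  have hint : Integrable (Function.uncurry fun z r => φ z * H (z, r)) (volume.prod volume) :=
    (integrable_indicator_abs_lt hg hgi).bdd_mul (hφ.comp measurable_fst).aestronglyMeasurable
      (.of_forall fun p => hC p.1)
  calc ∫ z, φ z * ∫ r in Ioi |z|, g r
      = ∫ z, ∫ r, φ z * H (z, r) := by
        simp only [hslice_fst, integral_const_mul, integral_indicator measurableSet_Ioi]
    _ = ∫ r, ∫ z, φ z * H (z, r) := integral_integral_swap hint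
    _ = ∫ r, g r * ∫ z in Ioo (-r) r, φ z := by
        simp only [hslice_snd, integral_indicator measurableSet_Ioo, integral_const_mul]
    _ = ∫ r in Ioi 0, g r * ∫ z in Ioo (-r) r, φ z := by
        refine (setIntegral_eq_integral_of_forall_compl_eq_zero fun r hr => ?_).symm
        rw [Ioo_eq_empty (by simp at hr; linarith)]
        simp

theorem integral_Ioo_exp_neg_I_mul {k : ℝ} (hk : k ≠ 0) {r : ℝ} (hr : 0 ≤ r) :
    ∫ z in Ioo (-r) r, Complex.exp (-(Complex.I * ((k * z : ℝ) : ℂ))) =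
      ((2 * Real.sin (k * r) / k : ℝ) : ℂ) := by
  have hc : -(Complex.I * k) ≠ 0 := by simp [hk]
  rw [← integral_Ioc_eq_integral_Ioo, ← intervalIntegral.integral_of_le (by linarith)]
  have hlin : ∀ z : ℝ, -(Complex.I * ((k * z : ℝ) : ℂ)) = -(Complex.I * k) * z := fun z => by
    push_cast; ring
  simp_rw [hlin, integral_exp_mul_complex hc]
  have hk' : (k : ℂ) ≠ 0 := by exact_mod_cast hk
  rw [div_eq_iff hc]
  push_cast
  rw [Complex.sin]
  field_simp
  ring_nf
  simp only [Complex.I_sq]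
  ring

/-- Reduction of the 3D Fourier transform of a spherically symmetric potential to a
one-dimensional integral:
`∫ V(‖x‖) e^{−i⟪q,x⟫} dx = (4π/q) ∫₀^∞ V(r) r sin(qr) dr`. -/
theorem fourier_radial_potential
    (V : ℝ → ℂ) (hV : Measurable V)
    (hint : IntegrableOn (fun r : ℝ => r ^ 2 * ‖V r‖) (Set.Ioi 0))
    (q : EuclideanSpace ℝ (Fin 3)) (hq : q ≠ 0) :
    Integrable (fun x : EuclideanSpace ℝ (Fin 3) =>
      V ‖x‖ * Complex.exp (-(Complex.I * (⟪q, x⟫ : ℝ)))) ∧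
    ∫ x : EuclideanSpace ℝ (Fin 3), V ‖x‖ * Complex.exp (-(Complex.I * (⟪q, x⟫ : ℝ)))
      = ((4 * Real.pi / ‖q‖ : ℝ) : ℂ) *
          ∫ r in Set.Ioi (0 : ℝ), V r * (r : ℂ) * (Real.sin (‖q‖ * r) : ℂ) := by
  have hq' : ‖q‖ ≠ 0 := norm_ne_zero_iff.2 hq
  have hnorm_exp : ∀ t : ℝ, ‖Complex.exp (-(Complex.I * t))‖ = 1 := fun t => by
    simp [Complex.norm_exp]
  have hV2 : IntegrableOn (fun r => r ^ 2 • V r) (Ioi 0) := by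
    refine (integrable_norm_iff (by fun_prop)).1
      (hint.congr_fun (fun r _ => by simp) measurableSet_Ioi)
  have hint_ambient : Integrable (fun x : EuclideanSpace ℝ (Fin 3) =>
      V ‖x‖ * Complex.exp (-(Complex.I * (⟪q, x⟫ : ℝ)))) :=
    ((integrable_fun_norm_addHaar volume).2 (by simpa using hV2)).mul_bdd (by fun_prop)
      (.of_forall fun x => (hnorm_exp _).le)
  refine ⟨hint_ambient, ?_⟩
  obtain ⟨e, he, he_norm, he_inner⟩ := exists_measurePreserving_inner_eq_mul_fst
    (F := EuclideanSpace ℝ (Fin 2)) (by simp) q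
  have hint_cyl : Integrable (fun p => V ‖e p‖ * Complex.exp (-(Complex.I * (⟪q, e p⟫ : ℝ))))
      (volume.prod volume) := (he.integrable_comp_emb e.measurableEmbedding).2 hint_ambient
  rw [← he.integral_comp e.measurableEmbedding, Measure.volume_eq_prod, integral_prod _ hint_cyl]
  simp only [he_norm, he_inner, integral_mul_const,
    integral_comp_sqrt_sq_add_norm_sq (F := EuclideanSpace ℝ (Fin 2)) (by simp)]
  have hswap := integral_mul_integral_Ioi_abs (g := fun r => r • V r)
    (φ := fun z => Complex.exp (-(Complex.I * ((‖q‖ * z : ℝ) : ℂ)))) (by fun_prop)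
    (by simpa only [smul_smul, ← pow_two] using hV2) (by fun_prop) (fun z => (hnorm_exp _).le)
  simp_rw [smul_mul_assoc, integral_smul, mul_comm _ (Complex.exp _), hswap]
  rw [← integral_const_mul, ← integral_smul]
  refine setIntegral_congr_fun measurableSet_Ioi fun r (hr : 0 < r) => ?_
  rw [integral_Ioo_exp_neg_I_mul hq' hr.le]
  simp only [Complex.real_smul]
  push_cast
  ring
end

section
/- For all real a > 0 and q > 0, the improper oscillatory integral ∫_{−∞}^{∞} exp(−i·q·z)/√(a² + z²) dz converges: there exists L ∈ ℂ such that the function R ↦ ∫_{−R}^{R} exp(−i·q·z)/√(a² + z²) dz tends to L as R → ∞. (The integrand is not Lebesgue integrable on ℝ, so the integral exists only as a symmetric improper integral; its value is 2K₀(qa).) -/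
/-!
For `z > |a|` the modulus `(a² + z²)^(-1/2)` of the integrand is at least `1 / (2z)`, so the
integrand is not integrable. Integrating by parts against `exp (-iqz) / (-iq)` moves the
derivative onto `(a² + z²)^(-1/2)`: the boundary terms are `O(1/R)`, and the new integrand is
`O(1/(a² + z²))`, hence integrable on `ℝ`.
-/

open MeasureTheory Filter Topology Complex

theorem tendsto_intervalIntegral_mul_deriv_of_integrable
    {A : Type*} [NormedRing A] [NormedAlgebra ℝ A] [CompleteSpace A] {u v u' v' : ℝ → A}
    (hu : ∀ x, HasDerivAt u (u' x) x) (hv : ∀ x, HasDerivAt v (v' x) x)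
    (hu' : ∀ R, IntervalIntegrable u' volume (-R) R)
    (hv' : ∀ R, IntervalIntegrable v' volume (-R) R)
    (hu'v : Integrable (u' * v)) (h_bot : Tendsto (u * v) atBot (𝓝 0))
    (h_top : Tendsto (u * v) atTop (𝓝 0)) :
    Tendsto (fun R ↦ ∫ x in -R..R, u x * v' x) atTop (𝓝 (-∫ x, u' x * v x)) := by
  have hparts (R : ℝ) : ∫ x in -R..R, u x * v' x
      = u R * v R - u (-R) * v (-R) - ∫ x in -R..R, u' x * v x :=
    intervalIntegral.integral_mul_deriv_eq_deriv_mul (fun x _ ↦ hu x) (fun x _ ↦ hv x)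
      (hu' R) (hv' R)
  simp_rw [hparts]
  simpa using (h_top.sub (h_bot.comp tendsto_neg_atTop_atBot)).sub
    (intervalIntegral_tendsto_integral hu'v tendsto_neg_atTop_atBot tendsto_id)

theorem hasDerivAt_exp_mul_div {c : ℂ} (hc : c ≠ 0) (x : ℝ) :
    HasDerivAt (fun y : ℝ ↦ exp (c * y) / c) (exp (c * x)) x := by
  simpa [mul_div_cancel_right₀ _ hc] using
    (((hasDerivAt_id (x : ℂ)).const_mul c).comp_ofReal.cexp).div_const c

theorem exists_tendsto_intervalIntegral_mul_exp {g g' : ℝ → ℂ} {c : ℂ} (hc : c ≠ 0)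
    (hc_re : c.re = 0) (hg : ∀ x, HasDerivAt g (g' x) x) (hg' : Integrable g')
    (h_bot : Tendsto g atBot (𝓝 0)) (h_top : Tendsto g atTop (𝓝 0)) :
    ∃ L, Tendsto (fun R ↦ ∫ x in -R..R, g x * exp (c * x)) atTop (𝓝 L) := by
  set v : ℝ → ℂ := fun y ↦ exp (c * y) / c
  have hv_norm (x : ℝ) : ‖v x‖ = ‖c‖⁻¹ := by
    simp [v, norm_exp, hc_re]
  have hv_cont : Continuous v := by fun_prop
  have hv_tendsto {l : Filter ℝ} (hl : Tendsto g l (𝓝 0)) : Tendsto (g * v) l (𝓝 0) :=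
    hl.zero_mul_isBoundedUnder_le ⟨‖c‖⁻¹, eventually_map.2 (.of_forall fun x ↦ (hv_norm x).le)⟩
  have hg'v : Integrable (g' * v) :=
    hg'.mul_bdd hv_cont.aestronglyMeasurable (.of_forall fun x ↦ (hv_norm x).le)
  exact ⟨_, tendsto_intervalIntegral_mul_deriv_of_integrable hg (hasDerivAt_exp_mul_div hc)
    (fun _ ↦ hg'.intervalIntegrable) (fun _ ↦ Continuous.intervalIntegrable (by fun_prop) _ _)
    hg'v (hv_tendsto h_bot) (hv_tendsto h_top)⟩

section InvSqrtSqAddSq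

variable {a : ℝ}

theorem integrable_inv_sq_add_sq (ha : a ≠ 0) :
    Integrable fun z : ℝ ↦ (a ^ 2 + z ^ 2)⁻¹ := by
  refine ((integrable_inv_one_add_sq.comp_div ha).const_mul (a ^ 2)⁻¹).congr
    (.of_forall fun z ↦ ?_)
  field_simp

theorem hasDerivAt_inv_sqrt_sq_add_sq (ha : a ≠ 0) (z : ℝ) :
    HasDerivAt (fun z : ℝ ↦ (√(a ^ 2 + z ^ 2))⁻¹)
      (-z / ((a ^ 2 + z ^ 2) * √(a ^ 2 + z ^ 2))) z := by
  have hpos : 0 < a ^ 2 + z ^ 2 := by positivity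
  have hsqrt := ((hasDerivAt_pow 2 z).const_add (a ^ 2)).sqrt hpos.ne'
  refine (hsqrt.inv (Real.sqrt_pos.2 hpos).ne').congr_deriv ?_
  field_simp
  rw [Real.sq_sqrt hpos.le]
  norm_num

theorem integrable_deriv_inv_sqrt_sq_add_sq (ha : a ≠ 0) :
    Integrable fun z : ℝ ↦ -z / ((a ^ 2 + z ^ 2) * √(a ^ 2 + z ^ 2)) := by
  refine (integrable_inv_sq_add_sq ha).mono' (by fun_prop : Measurable _).aestronglyMeasurable
    (.of_forall fun z ↦ ?_)
  have hpos : 0 < a ^ 2 + z ^ 2 := by positivity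
  rw [norm_div, norm_neg, Real.norm_eq_abs, Real.norm_of_nonneg (by positivity),
    div_le_iff₀ (by positivity), inv_mul_cancel_left₀ hpos.ne']
  exact Real.abs_le_sqrt (by nlinarith)

theorem tendsto_inv_sqrt_sq_add_sq_cocompact (a : ℝ) :
    Tendsto (fun z : ℝ ↦ (√(a ^ 2 + z ^ 2))⁻¹) (cocompact ℝ) (𝓝 0) := by
  have hsq : Tendsto (fun z : ℝ ↦ a ^ 2 + z ^ 2) (cocompact ℝ) atTop := by
    refine tendsto_atTop_add_const_left _ _ ?_
    simpa only [Function.comp_def, Real.norm_eq_abs, sq_abs] using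
      (tendsto_pow_atTop two_ne_zero).comp (tendsto_norm_cocompact_atTop (E := ℝ))
  exact tendsto_inv_atTop_zero.comp (Real.tendsto_sqrt_atTop.comp hsq)

theorem not_integrable_inv_sqrt_sq_add_sq (a : ℝ) :
    ¬ Integrable fun z : ℝ ↦ (√(a ^ 2 + z ^ 2))⁻¹ := by
  intro h
  refine not_integrableOn_Ioi_inv (a := |a|) ((h.const_mul 2).integrableOn.mono' (by fun_prop) ?_)
  refine (ae_restrict_iff' measurableSet_Ioi).2 (.of_forall fun z hz ↦ ?_)
  have hz : |a| < z := hz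
  have hz0 : 0 < z := (abs_nonneg a).trans_lt hz
  have hsqrt : √(a ^ 2 + z ^ 2) ≤ 2 * z := by
    rw [Real.sqrt_le_left (by positivity)]
    nlinarith [sq_abs a, abs_nonneg a]
  calc ‖z⁻¹‖ = 2 * (2 * z)⁻¹ := by
        rw [Real.norm_of_nonneg (by positivity)]; field_simp
    _ ≤ 2 * (√(a ^ 2 + z ^ 2))⁻¹ := by gcongr

end InvSqrtSqAddSq

/-- The improper oscillatory integral `∫_{−∞}^{∞} e^{−iqz}/√(a²+z²) dz` converges as a
symmetric improper integral (its value is `2K₀(qa)`), even though the integrand is not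
Lebesgue integrable on `ℝ`. -/
theorem oscillatory_integral_converges (a q : ℝ) (ha : 0 < a) (hq : 0 < q) :
    ¬ Integrable (fun z : ℝ =>
        Complex.exp (-(Complex.I * (q : ℂ) * (z : ℂ))) / ((Real.sqrt (a ^ 2 + z ^ 2) : ℝ) : ℂ)) ∧
    ∃ L : ℂ, Tendsto (fun R : ℝ =>
        ∫ z in Set.Icc (-R) R,
          Complex.exp (-(Complex.I * (q : ℂ) * (z : ℂ))) / ((Real.sqrt (a ^ 2 + z ^ 2) : ℝ) : ℂ))
      atTop (nhds L) := by
  have hf : (fun z : ℝ ↦ exp (-(I * q * z)) / ((√(a ^ 2 + z ^ 2) : ℝ) : ℂ))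
      = fun z : ℝ ↦ (((√(a ^ 2 + z ^ 2))⁻¹ : ℝ) : ℂ) * exp (-(I * q) * z) := by
    ext z
    push_cast
    ring_nf
  refine ⟨fun h ↦ not_integrable_inv_sqrt_sq_add_sq a ?_, ?_⟩
  · refine h.norm.congr (.of_forall fun z ↦ ?_)
    simp [norm_exp]
  · have hdecay := (tendsto_inv_sqrt_sq_add_sq_cocompact a).ofReal
    rw [Complex.ofReal_zero] at hdecay
    obtain ⟨L, hL⟩ := exists_tendsto_intervalIntegral_mul_exp (c := -(I * q)) (by simp [hq.ne'])
      (by simp) (fun z ↦ (hasDerivAt_inv_sqrt_sq_add_sq ha.ne' z).ofReal_comp)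
      (integrable_deriv_inv_sqrt_sq_add_sq ha.ne').ofReal
      (hdecay.mono_left atBot_le_cocompact) (hdecay.mono_left atTop_le_cocompact)
    refine ⟨L, hL.congr' ?_⟩
    filter_upwards [eventually_ge_atTop 0] with R hR
    rw [intervalIntegral.integral_of_le (by linarith), integral_Icc_eq_integral_Ioc, hf]
end
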